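/- arXiv:1904.02799 — 2 statements merged into one kernel-verified Lean document; each statement's English description precedes it below -/
import Mathlib

section
/- In a locally in-semicomplete digraph D, if X and Y are distinct strong components and there exist x ∈ V(X), y ∈ V(Y) with arc xy, then x dominates every vertex of Y (for all z ∈ V(Y), xz is an arc and zx is not). -/
open Relation

variable {V : Type*}

/-- `u` and `v` are adjacent in the digraph with arc relation `A`. -/
def DAdj (A : V → V → Prop) (u v : V) : Prop := A u v ∨ A v u

/-- `v` is a source: no arc enters `v`. -/
def IsSource (A : V → V → Prop) (v : V) : Prop := ∀ u, ¬ A u v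

/-- `v` is a sink: no arc leaves `v`. -/
def IsSink (A : V → V → Prop) (v : V) : Prop := ∀ u, ¬ A v u

/-- A stable (independent) set of the digraph. -/
def IsStable (A : V → V → Prop) (S : Set V) : Prop :=
  ∀ u ∈ S, ∀ v ∈ S, u ≠ v → ¬ DAdj A u v

/-- The stability number. -/
noncomputable def alphaNum (A : V → V → Prop) : ℕ :=
  sSup {n | ∃ S : Set V, IsStable A S ∧ S.ncard = n}

/-- A maximum stable set. -/
def IsMaxStable (A : V → V → Prop) (S : Set V) : Prop :=
  IsStable A S ∧ ∀ T : Set V, IsStable A T → T.ncard ≤ S.ncard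

/-- A (nonempty) directed path, given as its list of vertices. -/
def IsDiPath (A : V → V → Prop) (l : List V) : Prop :=
  l ≠ [] ∧ l.Nodup ∧ l.Chain' A

/-- A path partition of the digraph: every vertex lies on exactly one of the paths. -/
def IsPathPartition (A : V → V → Prop) (P : Set (List V)) : Prop :=
  (∀ l ∈ P, IsDiPath A l) ∧ ∀ v : V, ∃! l, l ∈ P ∧ v ∈ l

/-- An `S`-path partition: each path contains exactly one vertex of `S`. -/
def IsSPartition (A : V → V → Prop) (S : Set V) (P : Set (List V)) : Prop :=
  IsPathPartition A P ∧ ∀ l ∈ P, ∃! s, s ∈ l ∧ s ∈ S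

/-- An `S`-BE-path partition: each path contains exactly one vertex of `S`,
which is moreover an endpoint of the path. -/
def IsBEPartition (A : V → V → Prop) (S : Set V) (P : Set (List V)) : Prop :=
  IsSPartition A S P ∧
    ∀ l ∈ P, ∀ s ∈ l, s ∈ S → l.head? = some s ∨ l.getLast? = some s

/-- The α-property: every maximum stable set admits an `S`-path partition. -/
def AlphaProperty (A : V → V → Prop) : Prop :=
  ∀ S : Set V, IsMaxStable A S → ∃ P, IsSPartition A S P

/-- The BE-property: every maximum stable set admits an `S`-BE-path partition. -/
def BEProperty (A : V → V → Prop) : Prop :=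
  ∀ S : Set V, IsMaxStable A S → ∃ P, IsBEPartition A S P

/-- α-diperfect: every induced subdigraph satisfies the α-property. -/
def AlphaDiperfect (A : V → V → Prop) : Prop :=
  ∀ W : Set V, AlphaProperty (fun a b : W => A a.1 b.1)

/-- BE-diperfect: every induced subdigraph satisfies the BE-property. -/
def BEDiperfect (A : V → V → Prop) : Prop :=
  ∀ W : Set V, BEProperty (fun a b : W => A a.1 b.1)

/-- Mutual reachability. -/
def MutReach (A : V → V → Prop) (u v : V) : Prop :=
  ReflTransGen A u v ∧ ReflTransGen A v u

/-- Semicomplete digraph: any two distinct vertices are adjacent. -/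
def Semicomplete (A : V → V → Prop) : Prop :=
  ∀ u v : V, u ≠ v → DAdj A u v

/-- Strongly connected digraph. -/
def Strong (A : V → V → Prop) : Prop :=
  ∀ u v : V, ReflTransGen A u v

/-- The digraph has an induced transitive triangle. -/
def HasInducedTransitiveTriangle (A : V → V → Prop) : Prop :=
  ∃ a b c : V, a ≠ b ∧ a ≠ c ∧ b ≠ c ∧
    A a b ∧ A a c ∧ A c b ∧ ¬ A b a ∧ ¬ A c a ∧ ¬ A b c

/-- The digraph is a blocking odd cycle: its underlying graph is an odd cycle
`x_1 x_2 ⋯ x_{2k+1} x_1` (with `k ≥ 1`; here `x i` is `x_{i+1}`), and both `x_1`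
and `x_2` are each a source or a sink. -/
def IsBlockingOddCycle (A : V → V → Prop) : Prop :=
  ∃ (k : ℕ) (x : ZMod (2 * k + 1) → V), 1 ≤ k ∧ Function.Bijective x ∧
    (∀ i j, DAdj A (x i) (x j) ↔ (j = i + 1 ∨ i = j + 1)) ∧
    (IsSource A (x 0) ∨ IsSink A (x 0)) ∧
    (IsSource A (x 1) ∨ IsSink A (x 1))

/-- The digraph is an anti-directed odd cycle: its underlying graph is an odd cycle
`x_1 ⋯ x_{2k+1} x_1` with `k ≥ 2` (here `x m` is `x_{m+1}`), and each of
`x_1, x_2, x_3, x_4, x_6, x_8, …, x_{2k}` is a source or a sink. -/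
def IsAntiDirectedOddCycle (A : V → V → Prop) : Prop :=
  ∃ (k : ℕ) (x : ZMod (2 * k + 1) → V), 2 ≤ k ∧ Function.Bijective x ∧
    (∀ i j, DAdj A (x i) (x j) ↔ (j = i + 1 ∨ i = j + 1)) ∧
    ∀ m : ℕ, m ≤ 2 * k →
      (m ≤ 3 ∨ (5 ≤ m ∧ m ≤ 2 * k - 1 ∧ Odd m)) →
      (IsSource A (x (m : ZMod (2 * k + 1))) ∨ IsSink A (x (m : ZMod (2 * k + 1))))

/-- `v` is a universal vertex. -/
def IsUniversal (A : V → V → Prop) (v : V) : Prop := ∀ u, u ≠ v → DAdj A u v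

/-- The underlying simple graph of a digraph. -/
def underlyingGraph (A : V → V → Prop) : SimpleGraph V where
  Adj u v := u ≠ v ∧ DAdj A u v
  symm := ⟨fun _ _ h => ⟨h.1.symm, h.2.symm⟩⟩
  loopless := ⟨fun _ h => h.1 rfl⟩

/-- The underlying graph of the digraph is a cycle. -/
def UnderlyingIsCycle (A : V → V → Prop) : Prop :=
  ∃ (n : ℕ) (x : ZMod n → V), 3 ≤ n ∧ Function.Bijective x ∧
    ∀ i j, DAdj A (x i) (x j) ↔ (j = i + 1 ∨ i = j + 1)

/-- A perfect graph: every induced subgraph has chromatic number equal to its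
clique number. -/
def GraphPerfect (G : SimpleGraph V) : Prop :=
  ∀ W : Set V, (G.induce W).chromaticNumber = ((G.induce W).cliqueNum : ℕ∞)

/-- A Hamilton directed path whose endpoints are `{s, t}` (in some order). -/
def HamiltonPathBetween (A : V → V → Prop) (s t : V) : Prop :=
  ∃ l : List V, IsDiPath A l ∧ (∀ v : V, v ∈ l) ∧
    ((l.head? = some s ∧ l.getLast? = some t) ∨
      (l.head? = some t ∧ l.getLast? = some s))

/-- A Hamilton directed path starting at `s` and ending at `t`. -/
def HamiltonPathFromTo (A : V → V → Prop) (s t : V) : Prop :=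
  ∃ l : List V, IsDiPath A l ∧ (∀ v : V, v ∈ l) ∧
    l.head? = some s ∧ l.getLast? = some t

/-- The exceptional strong semicomplete digraph on four vertices
(`a,b,c,d = 0,1,2,3`): the 4-cycle `a→d→c→b→a` together with digons `a↔c`, `b↔d`. -/
def BadFour : Fin 4 → Fin 4 → Prop := fun u v =>
  (u, v) ∈ ({(0,3), (3,2), (2,1), (1,0), (0,2), (2,0), (1,3), (3,1)} :
    Set (Fin 4 × Fin 4))

/-- A locally in-semicomplete digraph: any two in-neighbours of a vertex are adjacent. -/
def LocallyInSemicomplete (A : V → V → Prop) : Prop :=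
  ∀ v u w : V, A u v → A w v → u ≠ w → DAdj A u w

/-- A strong component: a maximal set of pairwise mutually reachable vertices. -/
def IsStrongComponent (A : V → V → Prop) (X : Set V) : Prop :=
  X.Nonempty ∧ (∀ u ∈ X, ∀ v ∈ X, MutReach A u v) ∧
    ∀ u v, v ∈ X → MutReach A u v → u ∈ X

/-- `C` is the vertex set of an induced cycle of `G`. -/
def InducedCycleSet (G : SimpleGraph V) (C : Set V) : Prop :=
  ∃ (n : ℕ) (x : ZMod n → V), 3 ≤ n ∧ Function.Injective x ∧ Set.range x = C ∧
    ∀ i j, G.Adj (x i) (x j) ↔ (j = i + 1 ∨ i = j + 1)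

/-- `G` contains a subdivision of `K₄`: four branch vertices joined by
pairwise internally disjoint paths. -/
def HasK4Subdivision (G : SimpleGraph V) : Prop :=
  ∃ (b : Fin 4 → V) (P : ∀ i j : Fin 4, G.Walk (b i) (b j)),
    Function.Injective b ∧
    (∀ i j, i ≠ j → (P i j).IsPath) ∧
    (∀ i j m, i ≠ j → b m ∈ (P i j).support → m = i ∨ m = j) ∧
    (∀ i j k l, i ≠ j → k ≠ l → ({i, j} : Finset (Fin 4)) ≠ {k, l} →
      ∀ v, v ∈ (P i j).support → v ∈ (P k l).support →
        (v = b i ∨ v = b j) ∧ (v = b k ∨ v = b l))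

/-- 2-connected: connected, at least 3 vertices, and no cut vertex. -/
def TwoConnected (G : SimpleGraph V) : Prop :=
  G.Connected ∧ 3 ≤ Nat.card V ∧
    ∀ v : V, (G.induce {u | u ≠ v}).Preconnected

/-! If `x → y` with `x ∉ Y` and `y ∈ Y`, walk back from `y` along a path inside `Y`: whenever
`x → w` and `c → w` with `c ∈ Y`, the in-neighbours `x` and `c` of `w` are adjacent, and `c → x`
is impossible because it would make `x` mutually reachable with `Y`. Hence `x → c`. -/

namespace IsStrongComponent

variable {A : V → V → Prop} {X Y : Set V}

theorem eq_of_mem (hX : IsStrongComponent A X) (hY : IsStrongComponent A Y) {v : V}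
    (hvX : v ∈ X) (hvY : v ∈ Y) : X = Y := by
  ext u
  exact ⟨fun hu => hY.2.2 u v hvY (hX.2.1 u hu v hvX),
    fun hu => hX.2.2 u v hvX (hY.2.1 u hu v hvY)⟩

theorem mem_of_reflTransGen (hY : IsStrongComponent A Y) {u v w : V} (hu : u ∈ Y) (hw : w ∈ Y)
    (huv : ReflTransGen A u v) (hvw : ReflTransGen A v w) : v ∈ Y :=
  hY.2.2 v w hw ⟨hvw, (hY.2.1 w hw u hu).1.trans huv⟩

theorem not_arc_of_arc_of_notMem (hY : IsStrongComponent A Y) {x y z : V} (hxY : x ∉ Y)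
    (hy : y ∈ Y) (hxy : A x y) (hz : z ∈ Y) : ¬ A z x := fun hzx =>
  hxY (hY.2.2 x z hz ⟨(ReflTransGen.single hxy).trans (hY.2.1 y hy z hz).1,
    ReflTransGen.single hzx⟩)

end IsStrongComponent

theorem LocallyInSemicomplete.arc_of_arc_of_notMem {A : V → V → Prop} {Y : Set V}
    (h : LocallyInSemicomplete A) (hY : IsStrongComponent A Y) {x y z : V} (hxY : x ∉ Y)
    (hy : y ∈ Y) (hxy : A x y) (hz : z ∈ Y) : A x z := by
  suffices key : ∀ w, ReflTransGen A w y → w ∈ Y → A x w from key z (hY.2.1 z hz y hy).1 hz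
  intro w hwy
  induction hwy using ReflTransGen.head_induction_on with
  | refl => exact fun _ => hxy
  | @head c w hcw hwy ih =>
    intro hcY
    have hxw : A x w :=
      ih (hY.mem_of_reflTransGen hcY hy (ReflTransGen.single hcw) hwy)
    have hxc : x ≠ c := fun hxc => hxY (hxc ▸ hcY)
    exact (h w x c hxw hcw hxc).resolve_right (hY.not_arc_of_arc_of_notMem hxY hy hxy hcY)

theorem locally_in_semicomplete_dominates_general {V : Type*} (A : V → V → Prop)
    (h : LocallyInSemicomplete A) (X Y : Set V)
    (hX : IsStrongComponent A X) (hY : IsStrongComponent A Y) (hXY : X ≠ Y)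
    (x y : V) (hx : x ∈ X) (hy : y ∈ Y) (hxy : A x y) :
    ∀ z ∈ Y, A x z ∧ ¬ A z x := by
  have hxY : x ∉ Y := fun hxY => hXY (hX.eq_of_mem hY hx hxY)
  exact fun z hz => ⟨h.arc_of_arc_of_notMem hY hxY hy hxy hz,
    hY.not_arc_of_arc_of_notMem hxY hy hxy hz⟩

/-- In a locally in-semicomplete digraph, if there is an arc from a strong component `X`
to a different strong component `Y`, then its tail dominates every vertex of `Y`. -/
theorem locally_in_semicomplete_dominates {V : Type*} [Finite V] (A : V → V → Prop)
    (hirr : ∀ v, ¬ A v v) (h : LocallyInSemicomplete A) (X Y : Set V)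
    (hX : IsStrongComponent A X) (hY : IsStrongComponent A Y) (hXY : X ≠ Y)
    (x y : V) (hx : x ∈ X) (hy : y ∈ Y) (hxy : A x y) :
    ∀ z ∈ Y, A x z ∧ ¬ A z x :=
  locally_in_semicomplete_dominates_general A h X Y hX hY hXY x y hx hy hxy
end

section
/- Let D be a digraph and S a maximum stable set of D. If every lonely arc of D having an endvertex in S leaves S (its tail is in S), then there exists an S-path partition P of D in which every path starts at its vertex of S. -/
open Relation

variable {V : Type*}

/-!
Delete every arc of `D` that enters `S`. Since `S` is stable and every lonely arc touching `S`
leaves it, each deleted arc `u → s` has its reverse `s → u` kept, so adjacency, hence the stable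
sets, do not change. By Gallai–Milgram the new digraph `D'` has a path partition with a stable
set meeting every path exactly once; thus it has at most `α(D) = |S|` paths. No path of `D'`
enters `S`, so every vertex of `S` starts its path, and counting shows that every path starts at
exactly one vertex of `S`.

Gallai–Milgram is proved as in Diestel (Thm. 2.5.1): a path cover whose set of terminal
vertices is inclusion-minimal has a stable transversal, by induction on the number of vertices.
-/

theorem IsDiPath.mono {A B : V → V → Prop} (hBA : ∀ u v, B u v → A u v) {l : List V}
    (hl : IsDiPath B l) : IsDiPath A l :=
  ⟨hl.1, hl.2.1, hl.2.2.imp fun u v => hBA u v⟩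

theorem IsDiPath.append_singleton {B : V → V → Prop} {l : List V} {w : V} (hl : IsDiPath B l)
    (hw : w ∉ l) (hB : ∀ a ∈ l.getLast?, B a w) : IsDiPath B (l ++ [w]) :=
  ⟨by simp, List.nodup_append.2 ⟨hl.2.1, List.nodup_singleton w, by grind⟩,
    List.isChain_append.2 ⟨hl.2.2, List.isChain_singleton w, by simpa using hB⟩⟩

theorem IsDiPath.of_append_singleton {B : V → V → Prop} {l : List V} {w : V}
    (hl : IsDiPath B (l ++ [w])) (hne : l ≠ []) : IsDiPath B l :=
  ⟨hne, (List.nodup_append.1 hl.2.1).1, (List.isChain_append.1 hl.2.2).1⟩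

structure IsPathCover (B : V → V → Prop) (s : Finset V) (P : Set (List V)) : Prop where
  isDiPath : ∀ l ∈ P, IsDiPath B l
  pairwise_disjoint : P.Pairwise List.Disjoint
  mem_iff : ∀ v, v ∈ s ↔ ∃ l ∈ P, v ∈ l

def terminals (P : Set (List V)) : Set V := {v | ∃ l ∈ P, l.getLast? = some v}

theorem terminals_insert {P : Set (List V)} {l : List V} {w : V} (h : l.getLast? = some w) :
    terminals (insert l P) = insert w (terminals P) := by
  ext v
  simp [terminals, or_and_right, exists_or, h, eq_comm]

namespace IsPathCover

variable {B : V → V → Prop} {s : Finset V} {P : Set (List V)} {l m : List V} {v w : V}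

theorem eq_of_mem (hP : IsPathCover B s P) (hl : l ∈ P) (hm : m ∈ P) (hvl : v ∈ l)
    (hvm : v ∈ m) : l = m :=
  by_contra fun h => hP.pairwise_disjoint hl hm h hvl hvm

theorem mem_of_mem (hP : IsPathCover B s P) (hl : l ∈ P) (hv : v ∈ l) : v ∈ s :=
  (hP.mem_iff v).2 ⟨l, hl, hv⟩

theorem terminals_subset (hP : IsPathCover B s P) : terminals P ⊆ s :=
  fun _ ⟨_, hl, hv⟩ => hP.mem_of_mem hl (List.mem_of_getLast? hv)

theorem terminals_diff_singleton (hP : IsPathCover B s P) (hl : l ∈ P)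
    (hw : l.getLast? = some w) : terminals (P \ {l}) = terminals P \ {w} := by
  ext v
  constructor
  · rintro ⟨m, ⟨hm, hml⟩, hv⟩
    refine ⟨⟨m, hm, hv⟩, fun hvw => hml ?_⟩
    subst hvw
    exact hP.eq_of_mem hm hl (List.mem_of_getLast? hv) (List.mem_of_getLast? hw)
  · rintro ⟨⟨m, hm, hv⟩, hvw⟩
    exact ⟨m, ⟨hm, by rintro rfl; exact hvw (Option.some.inj (hv.symm.trans hw))⟩, hv⟩

theorem existsUnique_mem_terminals (hP : IsPathCover B s P) (hl : l ∈ P) :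
    ∃! v, v ∈ l ∧ v ∈ terminals P := by
  obtain ⟨w, hw⟩ :=
    Option.ne_none_iff_exists'.1 (List.getLast?_eq_none_iff.not.2 (hP.isDiPath l hl).1)
  refine ⟨w, ⟨List.mem_of_getLast? hw, l, hl, hw⟩, ?_⟩
  rintro v ⟨hvl, m, hm, hv⟩
  obtain rfl := hP.eq_of_mem hm hl (List.mem_of_getLast? hv) hvl
  exact Option.some.inj (hv.symm.trans hw)

theorem diff_singleton [DecidableEq V] (hP : IsPathCover B s P) (hl : l ∈ P) {s' : Finset V}
    (hs' : ∀ v, v ∈ s' ↔ v ∈ s ∧ v ∉ l) : IsPathCover B s' (P \ {l}) where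
  isDiPath m hm := hP.isDiPath m hm.1
  pairwise_disjoint := hP.pairwise_disjoint.mono Set.sdiff_subset
  mem_iff v := by
    rw [hs', hP.mem_iff]
    constructor
    · rintro ⟨⟨m, hm, hvm⟩, hvl⟩
      exact ⟨m, ⟨hm, by rintro rfl; exact hvl hvm⟩, hvm⟩
    · rintro ⟨m, ⟨hm, hml⟩, hvm⟩
      exact ⟨⟨m, hm, hvm⟩, fun hvl => hml (hP.eq_of_mem hm hl hvm hvl)⟩

theorem insert_path (hP : IsPathCover B s P) (hl : IsDiPath B l) (hls : ∀ v ∈ l, v ∉ s)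
    {s' : Finset V} (hs' : ∀ v, v ∈ s' ↔ v ∈ s ∨ v ∈ l) : IsPathCover B s' (insert l P) where
  isDiPath m hm := by
    rcases hm with rfl | hm
    exacts [hl, hP.isDiPath m hm]
  pairwise_disjoint := by
    have hdisj : ∀ m ∈ P, List.Disjoint l m :=
      fun m hm v hvl hvm => hls v hvl (hP.mem_of_mem hm hvm)
    exact hP.pairwise_disjoint.insert fun m hm _ => ⟨hdisj m hm, (hdisj m hm).symm⟩
  mem_iff v := by
    simp only [hs', hP.mem_iff, Set.mem_insert_iff, exists_eq_or_imp]
    exact or_comm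

end IsPathCover

section PathCoverOperations

variable [DecidableEq V] {B : V → V → Prop} {s : Finset V} {P : Set (List V)} {l : List V}
  {a v w : V}

theorem IsPathCover.insert_singleton (hP : IsPathCover B s P) (hw : w ∉ s) :
    IsPathCover B (insert w s) (insert [w] P) :=
  hP.insert_path ⟨List.cons_ne_nil w [], List.nodup_singleton w, List.isChain_singleton w⟩
    (by simpa using hw) (by simp [or_comm])

theorem IsPathCover.exists_append (hP : IsPathCover B s P) (hw : w ∉ s) (ha : a ∈ terminals P)
    (hB : B a w) :
    ∃ Q, IsPathCover B (insert w s) Q ∧ terminals Q = insert w (terminals P \ {a}) := by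
  obtain ⟨l, hl, hla⟩ := ha
  have hls : ∀ v ∈ l, v ∈ s := fun v => hP.mem_of_mem hl
  refine ⟨insert (l ++ [w]) (P \ {l}), ?_, ?_⟩
  · refine (hP.diff_singleton hl (s' := s.filter (· ∉ l)) (by simp)).insert_path
      ((hP.isDiPath l hl).append_singleton (fun h => hw (hls w h)) (by simpa [hla] using hB))
      (by grind) fun v => ?_
    by_cases hv : v ∈ l <;> simp [hv, hls v, or_comm]
  · rw [terminals_insert List.getLast?_concat, hP.terminals_diff_singleton hl hla]

theorem IsPathCover.dropLast (hP : IsPathCover B s P) (hl : l ++ [w] ∈ P)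
    (hv : l.getLast? = some v) :
    IsPathCover B (s.erase w) (insert l (P \ {l ++ [w]})) ∧
      terminals (insert l (P \ {l ++ [w]})) = insert v (terminals P \ {w}) := by
  have hlw := hP.isDiPath _ hl
  have hwl : w ∉ l := fun h => (List.nodup_append.1 hlw.2.1).2.2 w h w (by simp) rfl
  refine ⟨(hP.diff_singleton hl (s' := s.filter (· ∉ l ++ [w])) (by simp)).insert_path
      (hlw.of_append_singleton (by rintro rfl; simp at hv)) (by simp +contextual) fun u => ?_, ?_⟩
  · have hus : u ∈ l → u ∈ s := fun h => hP.mem_of_mem hl (by simp [h])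
    by_cases hu : u ∈ l
    · simp [hu, hus hu, show u ≠ w by rintro rfl; exact hwl hu]
    · simp [hu, and_comm]
  · rw [terminals_insert hv, hP.terminals_diff_singleton hl List.getLast?_concat]

end PathCoverOperations

theorem exists_isPathCover [DecidableEq V] (B : V → V → Prop) (s : Finset V) :
    ∃ P, IsPathCover B s P := by
  induction s using Finset.induction_on with
  | empty => exact ⟨∅, ⟨fun _ h => h.elim, Set.pairwise_empty _, by simp⟩⟩
  | insert w s hw ih =>
    obtain ⟨P, hP⟩ := ih
    exact ⟨_, hP.insert_singleton hw⟩

structure IsMinimalPathCover (B : V → V → Prop) (s : Finset V) (P : Set (List V)) : Prop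
    extends IsPathCover B s P where
  minimal : ∀ Q, IsPathCover B s Q → ¬ terminals Q ⊂ terminals P

namespace IsMinimalPathCover

variable [DecidableEq V] {B : V → V → Prop} {s : Finset V} {P : Set (List V)} {l : List V}
  {u v w : V}

theorem singleton_notMem (hP : IsMinimalPathCover B s P) (hu : u ∈ terminals P) (huw : u ≠ w)
    (hB : B u w) : [w] ∉ P := by
  intro hw
  have hwP : w ∈ terminals P := ⟨[w], hw, rfl⟩
  have hP' := hP.diff_singleton hw (s' := s.erase w) (by simp [and_comm])
  have hter := hP.terminals_diff_singleton hw rfl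
  obtain ⟨Q, hQ, hQter⟩ :=
    hP'.exists_append (Finset.notMem_erase w s) (hter ▸ ⟨hu, huw⟩) hB
  rw [Finset.insert_erase (hP.terminals_subset hwP)] at hQ
  exact hP.minimal Q hQ (by grind)

theorem dropLast (hP : IsMinimalPathCover B s P) (hl : l ++ [w] ∈ P)
    (hv : l.getLast? = some v) (hu : u ∈ terminals P) (huw : u ≠ w) (hB : B u w) :
    IsMinimalPathCover B (s.erase w) (insert l (P \ {l ++ [w]})) := by
  obtain ⟨hP', hter⟩ := hP.toIsPathCover.dropLast hl hv
  refine ⟨hP', fun Q hQ hlt => ?_⟩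
  rw [hter] at hlt
  have hwP : w ∈ terminals P := ⟨_, hl, List.getLast?_concat⟩
  have hvw : B v w := (List.isChain_append.1 (hP.isDiPath _ hl).2.2).2.2 v hv w rfl
  suffices ∃ Q', IsPathCover B (insert w (s.erase w)) Q' ∧ terminals Q' ⊂ terminals P by
    obtain ⟨Q', hQ', hlt'⟩ := this
    rw [Finset.insert_erase (hP.terminals_subset hwP)] at hQ'
    exact hP.minimal Q' hQ' hlt'
  -- A cover of `s.erase w` with fewer terminals extends to `s` through the arc `v → w`, the
  -- arc `u → w`, or the trivial path `[w]`, and then has fewer terminals than `P`.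
  have hw := Finset.notMem_erase w s
  by_cases hvQ : v ∈ terminals Q
  · obtain ⟨Q', hQ', hQ'ter⟩ := hQ.exists_append hw hvQ hvw
    exact ⟨Q', hQ', by grind⟩
  by_cases huQ : u ∈ terminals Q
  · obtain ⟨Q', hQ', hQ'ter⟩ := hQ.exists_append hw huQ hB
    exact ⟨Q', hQ', by grind⟩
  · exact ⟨_, hQ.insert_singleton hw, by grind [terminals_insert (P := Q) (l := [w]) rfl]⟩

theorem exists_isStable_transversal (hP : IsMinimalPathCover B s P) :
    ∃ T : Set V, T ⊆ s ∧ IsStable B T ∧ ∀ l ∈ P, ∃! v, v ∈ l ∧ v ∈ T := by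
  induction s using Finset.strongInduction generalizing P with
  | H s ih =>
  by_cases hstab : IsStable B (terminals P)
  · exact ⟨_, hP.terminals_subset, hstab, fun l hl => hP.existsUnique_mem_terminals hl⟩
  obtain ⟨u, hu, w, hw, huw, hB⟩ : ∃ u ∈ terminals P, ∃ w ∈ terminals P, u ≠ w ∧ B u w := by
    simp only [IsStable, DAdj, not_forall, not_not] at hstab
    obtain ⟨x, hx, y, hy, hxy, h | h⟩ := hstab
    exacts [⟨x, hx, y, hy, hxy, h⟩, ⟨y, hy, x, hx, hxy.symm, h⟩]
  obtain ⟨l, hl, hlw⟩ := hw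
  obtain ⟨q, rfl⟩ := List.getLast?_eq_some_iff.1 hlw
  obtain rfl | ⟨q', v, rfl⟩ := q.eq_nil_or_concat'
  · exact absurd hl (hP.singleton_notMem hu huw hB)
  obtain ⟨T, hTs, hT, hTP⟩ := ih _ (Finset.erase_ssubset (hP.mem_of_mem hl (by simp)))
    (hP.dropLast hl List.getLast?_concat hu huw hB)
  refine ⟨T, fun x hx => Finset.mem_of_mem_erase (hTs hx), hT, fun m hm => ?_⟩
  by_cases hml : m = q' ++ [v] ++ [w]
  · subst hml
    have hwT : w ∉ T := fun h => by simpa using hTs h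
    refine (existsUnique_congr fun x => ?_).1 (hTP _ (Set.mem_insert _ _))
    simp only [List.mem_append, List.mem_singleton]
    grind
  · exact hTP m (Or.inr ⟨hm, hml⟩)

end IsMinimalPathCover

theorem exists_isMinimalPathCover [DecidableEq V] (B : V → V → Prop) (s : Finset V) :
    ∃ P, IsMinimalPathCover B s P := by
  have hfin : {T | ∃ P, IsPathCover B s P ∧ terminals P = T}.Finite :=
    s.finite_toSet.finite_subsets.subset fun _ ⟨_, hP, hT⟩ => hT ▸ hP.terminals_subset
  obtain ⟨P, hP⟩ := exists_isPathCover B s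
  obtain ⟨_, hmin⟩ := hfin.exists_minimal ⟨_, P, hP, rfl⟩
  obtain ⟨P, hP, rfl⟩ := hmin.prop
  exact ⟨P, ⟨hP, fun Q hQ hlt => hmin.not_lt ⟨Q, hQ, rfl⟩ hlt⟩⟩

theorem IsPathCover.isPathPartition [Fintype V] {B : V → V → Prop} {P : Set (List V)}
    (hP : IsPathCover B Finset.univ P) : IsPathPartition B P := by
  refine ⟨hP.isDiPath, fun v => ?_⟩
  obtain ⟨l, hl, hv⟩ := (hP.mem_iff v).1 (Finset.mem_univ v)
  exact ⟨l, ⟨hl, hv⟩, fun m ⟨hm, hvm⟩ => hP.eq_of_mem hm hl hvm hv⟩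

theorem gallai_milgram [Finite V] (B : V → V → Prop) :
    ∃ T P, IsStable B T ∧ IsSPartition B T P := by
  classical
  have := Fintype.ofFinite V
  obtain ⟨P, hP⟩ := exists_isMinimalPathCover B Finset.univ
  obtain ⟨T, -, hT, hTP⟩ := hP.exists_isStable_transversal
  exact ⟨T, P, hT, hP.isPathPartition, hTP⟩

section Partitions

variable {A B : V → V → Prop} {S : Set V} {P : Set (List V)}

theorem IsPathPartition.mono (hBA : ∀ u v, B u v → A u v) (hP : IsPathPartition B P) :
    IsPathPartition A P :=
  ⟨fun l hl => (hP.1 l hl).mono hBA, hP.2⟩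

theorem IsPathPartition.finite [Finite V] (hP : IsPathPartition A P) : P.Finite := by
  choose f hf using fun v => (hP.2 v).exists
  refine (Set.finite_range f).subset fun l hl => ?_
  obtain ⟨v, hv⟩ := List.exists_mem_of_ne_nil _ (hP.1 l hl).1
  exact ⟨v, (hP.2 v).unique (hf v) ⟨hl, hv⟩⟩

theorem IsSPartition.ncard_eq (hP : IsSPartition A S P) : P.ncard = S.ncard := by
  choose f hf using fun v => (hP.1.2 v).exists
  have hinj : Set.InjOn f S := fun x hx y hy hxy =>
    (hP.2 (f x) (hf x).1).unique ⟨(hf x).2, hx⟩ ⟨hxy ▸ (hf y).2, hy⟩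
  have himage : f '' S = P := by
    ext l
    constructor
    · rintro ⟨v, -, rfl⟩
      exact (hf v).1
    · intro hl
      obtain ⟨v, ⟨hvl, hvS⟩, -⟩ := hP.2 l hl
      exact ⟨v, hvS, (hP.1.2 v).unique (hf v) ⟨hl, hvl⟩⟩
  rw [← himage, hinj.ncard_image]

theorem IsPathPartition.isSPartition_of_ncard_le [Finite V] (hP : IsPathPartition A P)
    (hS : ∀ l ∈ P, ∀ x ∈ l, ∀ y ∈ l, x ∈ S → y ∈ S → x = y) (hcard : P.ncard ≤ S.ncard) :
    IsSPartition A S P := by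
  choose f hf using fun v => (hP.2 v).exists
  have hinj : Set.InjOn f S := fun x hx y hy hxy =>
    hS (f x) (hf x).1 x (hf x).2 y (hxy ▸ (hf y).2) hx hy
  have himage : f '' S = P :=
    Set.eq_of_subset_of_ncard_le (Set.image_subset_iff.2 fun v _ => (hf v).1)
      (hinj.ncard_image ▸ hcard) hP.finite
  refine ⟨hP, fun l hl => ?_⟩
  obtain ⟨v, hvS, rfl⟩ := himage ▸ hl
  exact ⟨v, ⟨(hf v).2, hvS⟩, fun y ⟨hy, hyS⟩ => hS _ (hf v).1 y hy v (hf v).2 hyS hvS⟩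

end Partitions

theorem IsStable.of_dAdj_imp {A B : V → V → Prop} (h : ∀ u v, u ≠ v → DAdj A u v → DAdj B u v)
    {T : Set V} (hT : IsStable B T) : IsStable A T :=
  fun u hu v hv huv hA => hT u hu v hv huv (h u v huv hA)

theorem List.IsChain.head?_eq_of_mem {α : Type*} {R : α → α → Prop} {S : Set α}
    (hR : ∀ u v, R u v → v ∉ S) {l : List α} (hl : l.IsChain R) {x : α} (hx : x ∈ l)
    (hxS : x ∈ S) : l.head? = some x := by
  induction l with
  | nil => simp at hx
  | cons a l ih =>
    rcases List.mem_cons.1 hx with rfl | hx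
    · rfl
    obtain ⟨b, l', rfl⟩ := List.exists_cons_of_ne_nil (List.ne_nil_of_mem hx)
    obtain ⟨hab, hl'⟩ := List.isChain_cons_cons.1 hl
    obtain rfl : b = x := by simpa using ih hl' hx
    exact absurd hxS (hR a b hab)

theorem dAdj_of_lonely_arcs_leave {A : V → V → Prop} {S : Set V} (hS : IsStable A S)
    (hlonely : ∀ u v : V, A u v → ¬ A v u → (u ∈ S ∨ v ∈ S) → u ∈ S) {u v : V} (huv : u ≠ v)
    (h : DAdj A u v) : DAdj (fun x y => A x y ∧ y ∉ S) u v := by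
  have key : ∀ x y, x ≠ y → A x y → DAdj (fun x y => A x y ∧ y ∉ S) x y := by
    intro x y hxy hA
    by_cases hy : y ∈ S
    · have hx : x ∉ S := fun hx => hS x hx y hy hxy (Or.inl hA)
      exact Or.inr ⟨by_contra fun h => hx (hlonely x y hA h (Or.inr hy)), hx⟩
    · exact Or.inl ⟨hA, hy⟩
  exact h.elim (key u v huv) fun h => (key v u huv.symm h).symm

theorem lonely_leaving_S_partition_general {V : Type*} [Finite V] (A : V → V → Prop)
    (S : Set V) (hS : IsMaxStable A S)
    (hlonely : ∀ u v : V, A u v → ¬ A v u → (u ∈ S ∨ v ∈ S) → u ∈ S) :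
    ∃ P : Set (List V), IsSPartition A S P ∧
      ∀ l ∈ P, ∀ s ∈ l, s ∈ S → l.head? = some s := by
  obtain ⟨T, P, hT, hP⟩ := gallai_milgram fun u v => A u v ∧ v ∉ S
  have hhead : ∀ l ∈ P, ∀ s ∈ l, s ∈ S → l.head? = some s :=
    fun l hl s => (hP.1.1 l hl).2.2.head?_eq_of_mem fun _ _ h => h.2
  have hcard : P.ncard ≤ S.ncard :=
    hP.ncard_eq ▸ hS.2 T (hT.of_dAdj_imp fun _ _ => dAdj_of_lonely_arcs_leave hS.1 hlonely)
  refine ⟨P, (hP.1.mono fun _ _ h => h.1).isSPartition_of_ncard_le ?_ hcard, hhead⟩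
  intro l hl x hx y hy hxS hyS
  exact Option.some.inj ((hhead l hl x hx hxS).symm.trans (hhead l hl y hy hyS))

/-- If every lonely arc of `D` with an endvertex in a maximum stable set `S` leaves `S`,
then there is an `S`-path partition in which every path starts at its vertex of `S`. -/
theorem lonely_leaving_S_partition {V : Type*} [Finite V] (A : V → V → Prop)
    (hirr : ∀ v, ¬ A v v) (S : Set V) (hS : IsMaxStable A S)
    (hlonely : ∀ u v : V, A u v → ¬ A v u → (u ∈ S ∨ v ∈ S) → u ∈ S) :
    ∃ P : Set (List V), IsSPartition A S P ∧
      ∀ l ∈ P, ∀ s ∈ l, s ∈ S → l.head? = some s :=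
  lonely_leaving_S_partition_general A S hS hlonely
end
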